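/- arXiv:2412.02657 — 5 statements merged into one kernel-verified Lean document; each statement's English description precedes it below -/
import Mathlib

section
/- Let k > 0, δ ∈ {1, −1}, η ∈ ℝ, and let α, β : ℝ → ℝ be smooth functions of t. Let U ⊆ ℝ² be open and let u, v : U → ℝ be smooth functions satisfying the nonlinear Schrödinger-type system u_t = β(t)(3δk(u² + v²)u_x − u_xxx) + α(t)(δk(u² + v²)v − v_xx) and v_t = β(t)(3δk(u² + v²)v_x − v_xxx) + α(t)(−δk(u² + v²)u + u_xx) on U. Then the functions f̂₁₁ = √k(u + v), f̂₂₁ = √k(v − u), f̂₃₁ = η, f̂₁₂ = −β√k(v_xx + u_xx) − √k(βη + α)(v_x − u_x) + √k(u + v)(ηα + η²β + δβk(u² + v²)), f̂₂₂ = −β√k(v_xx − u_xx) + √k(βη + α)(v_x + u_x) + √k(v − u)(ηα + η²β + δβk(u² + v²)), f̂₃₂ = 2δkβ(v·u_x − u·v_x) + (ηβ + α)(δk(u² + v²) + η²) satisfy, at every point of U, the local structure equations: −∂_t f̂₁₁ + ∂_x f̂₁₂ = f̂₃₁f̂₂₂ − f̂₃₂f̂₂₁, −∂_t f̂₂₁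 + ∂_x f̂₂₂ = f̂₁₁f̂₃₂ − f̂₁₂f̂₃₁, −∂_t f̂₃₁ + ∂_x f̂₃₂ = δ(f̂₁₁f̂₂₂ − f̂₁₂f̂₂₁). -/
/-- Partial derivative with respect to the first (space) variable. -/
noncomputable def px (f : ℝ × ℝ → ℝ) : ℝ × ℝ → ℝ := fun p => fderiv ℝ f p (1, 0)

/-- Partial derivative with respect to the second (time) variable. -/
noncomputable def pt (f : ℝ × ℝ → ℝ) : ℝ × ℝ → ℝ := fun p => fderiv ℝ f p (0, 1)

/-- The local structure equations of a surface of constant curvature `-δ`. -/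
def StructEqs (δ : ℝ) (g11 g12 g21 g22 g31 g32 : ℝ × ℝ → ℝ) (U : Set (ℝ × ℝ)) : Prop :=
  ∀ p ∈ U,
    -(pt g11 p) + px g12 p = g31 p * g22 p - g32 p * g21 p ∧
    -(pt g21 p) + px g22 p = g11 p * g32 p - g12 p * g31 p ∧
    -(pt g31 p) + px g32 p = δ * (g11 p * g22 p - g12 p * g21 p)

section helpers
variable {f g : ℝ × ℝ → ℝ} {p : ℝ × ℝ}

lemma contDiffAt_px (h : ContDiffAt ℝ (⊤ : ℕ∞) f p) : ContDiffAt ℝ (⊤ : ℕ∞) (px f) p :=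
  (h.fderiv_right (m := (⊤ : ℕ∞)) (by simp)).clm_apply (contDiffAt_const (c := ((1:ℝ),(0:ℝ))))

lemma px_add (hf : DifferentiableAt ℝ f p) (hg : DifferentiableAt ℝ g p) :
    px (fun q => f q + g q) p = px f p + px g p := by
  simp [px, fderiv_fun_add hf hg]

lemma px_sub (hf : DifferentiableAt ℝ f p) (hg : DifferentiableAt ℝ g p) :
    px (fun q => f q - g q) p = px f p - px g p := by
  simp [px, fderiv_fun_sub hf hg]

lemma px_neg : px (fun q => -f q) p = -px f p := by
  simp [px, fderiv_neg]

lemma px_mul (hf : DifferentiableAt ℝ f p) (hg : DifferentiableAt ℝ g p) :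
    px (fun q => f q * g q) p = px f p * g p + f p * px g p := by
  simp [px, fderiv_fun_mul hf hg]; ring

lemma px_pow (n : ℕ) (hf : DifferentiableAt ℝ f p) :
    px (fun q => f q ^ n) p = n * f p ^ (n - 1) * px f p := by
  have h : HasFDerivAt (fun q => f q ^ n) ((↑n * f p ^ (n - 1)) • fderiv ℝ f p) p :=
    (hasDerivAt_pow n (f p)).comp_hasFDerivAt p hf.hasFDerivAt
  simp [px, h.fderiv]

lemma px_const (c : ℝ) : px (fun _ => c) p = 0 := by
  simp [px]

lemma px_snd (c : ℝ → ℝ) (hc : DifferentiableAt ℝ c p.2) :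
    px (fun q : ℝ × ℝ => c q.2) p = 0 := by
  have h : HasFDerivAt (fun q : ℝ × ℝ => c q.2)
      (deriv c p.2 • ContinuousLinearMap.snd ℝ ℝ ℝ) p :=
    hc.hasDerivAt.comp_hasFDerivAt p hasFDerivAt_snd
  simp [px, h.fderiv]

lemma pt_add (hf : DifferentiableAt ℝ f p) (hg : DifferentiableAt ℝ g p) :
    pt (fun q => f q + g q) p = pt f p + pt g p := by
  simp [pt, fderiv_fun_add hf hg]

lemma pt_sub (hf : DifferentiableAt ℝ f p) (hg : DifferentiableAt ℝ g p) :
    pt (fun q => f q - g q) p = pt f p - pt g p := by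
  simp [pt, fderiv_fun_sub hf hg]

lemma pt_mul (hf : DifferentiableAt ℝ f p) (hg : DifferentiableAt ℝ g p) :
    pt (fun q => f q * g q) p = pt f p * g p + f p * pt g p := by
  simp [pt, fderiv_fun_mul hf hg]; ring

lemma pt_const (c : ℝ) : pt (fun _ => c) p = 0 := by
  simp [pt]

end helpers

/-- Every smooth solution of the nonlinear Schrödinger-type family of
third-order systems provides, via the stated associated functions with
parameter `η`, a solution of the structure equations with curvature `-δ`. -/
theorem NLS_family_describes_pss_or_ss (k : ℝ) (hk : 0 < k) (δ : ℝ)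
    (hδ : δ = 1 ∨ δ = -1) (η : ℝ) (α β : ℝ → ℝ)
    (hα : ContDiff ℝ (⊤ : ℕ∞) α) (hβ : ContDiff ℝ (⊤ : ℕ∞) β)
    (U : Set (ℝ × ℝ)) (hU : IsOpen U)
    (u v : ℝ × ℝ → ℝ) (hu : ContDiffOn ℝ (⊤ : ℕ∞) u U) (hv : ContDiffOn ℝ (⊤ : ℕ∞) v U)
    (hsys : ∀ p ∈ U,
      pt u p = β p.2 * (3 * δ * k * (u p ^ 2 + v p ^ 2) * px u p - px (px (px u)) p)
        + α p.2 * (δ * k * (u p ^ 2 + v p ^ 2) * v p - px (px v) p) ∧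
      pt v p = β p.2 * (3 * δ * k * (u p ^ 2 + v p ^ 2) * px v p - px (px (px v)) p)
        + α p.2 * (-(δ * k * (u p ^ 2 + v p ^ 2) * u p) + px (px u) p)) :
    StructEqs δ
      (fun p => Real.sqrt k * (u p + v p))
      (fun p => -(β p.2) * Real.sqrt k * (px (px v) p + px (px u) p)
        - Real.sqrt k * (β p.2 * η + α p.2) * (px v p - px u p)
        + Real.sqrt k * (u p + v p)
          * (η * α p.2 + η ^ 2 * β p.2 + δ * β p.2 * k * (u p ^ 2 + v p ^ 2)))
      (fun p => Real.sqrt k * (v p - u p))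
      (fun p => -(β p.2) * Real.sqrt k * (px (px v) p - px (px u) p)
        + Real.sqrt k * (β p.2 * η + α p.2) * (px v p + px u p)
        + Real.sqrt k * (v p - u p)
          * (η * α p.2 + η ^ 2 * β p.2 + δ * β p.2 * k * (u p ^ 2 + v p ^ 2)))
      (fun _ => η)
      (fun p => 2 * δ * k * β p.2 * (v p * px u p - u p * px v p)
        + (η * β p.2 + α p.2) * (δ * k * (u p ^ 2 + v p ^ 2) + η ^ 2))
      U := by
  intro p hp
  obtain ⟨hut, hvt⟩ := hsys p hp
  have hmem := hU.mem_nhds hp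
  have cu : ContDiffAt ℝ (⊤ : ℕ∞) u p := hu.contDiffAt hmem
  have cv : ContDiffAt ℝ (⊤ : ℕ∞) v p := hv.contDiffAt hmem
  have cux := contDiffAt_px cu
  have cvx := contDiffAt_px cv
  have cuxx := contDiffAt_px cux
  have cvxx := contDiffAt_px cvx
  have du : DifferentiableAt ℝ u p := cu.differentiableAt (by simp)
  have dv : DifferentiableAt ℝ v p := cv.differentiableAt (by simp)
  have dux : DifferentiableAt ℝ (px u) p := cux.differentiableAt (by simp)
  have dvx : DifferentiableAt ℝ (px v) p := cvx.differentiableAt (by simp)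
  have duxx : DifferentiableAt ℝ (px (px u)) p := cuxx.differentiableAt (by simp)
  have dvxx : DifferentiableAt ℝ (px (px v)) p := cvxx.differentiableAt (by simp)
  have hα' : Differentiable ℝ α := hα.differentiable (by simp)
  have hβ' : Differentiable ℝ β := hβ.differentiable (by simp)
  have hs : Real.sqrt k ^ 2 = k := Real.sq_sqrt hk.le
  rcases hδ with rfl | rfl <;>
  refine ⟨?_, ?_, ?_⟩ <;>
  · simp (disch := fun_prop) only [px_add, px_sub, px_mul, px_pow, px_const, px_snd,
      px_neg, pt_add, pt_sub, pt_mul, pt_const]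
    try rw [hut, hvt]
    generalize hgen : Real.sqrt k = s
    rw [hgen] at hs
    rw [← hs]
    push_cast
    ring
end

section
/- Let η ∈ ℝ, let U ⊆ ℝ² be open, and let u, v : U → ℝ be smooth functions satisfying the nonlinear Schrödinger system u_t + v_xx − 2(u² + v²)v = 0 and −v_t + u_xx − 2(u² + v²)u = 0 on U. Then the functions f̂₁₁ = 2u, f̂₂₁ = −2v, f̂₃₁ = 2η, f̂₁₂ = −4ηu − 2v_x, f̂₂₂ = 4ηv − 2u_x, f̂₃₂ = −4η² − 2(u² + v²) satisfy, at every point of U, the local structure equations with δ = 1: −∂_t f̂₁₁ + ∂_x f̂₁₂ = f̂₃₁f̂₂₂ − f̂₃₂f̂₂₁, −∂_t f̂₂₁ + ∂_x f̂₂₂ = f̂₁₁f̂₃₂ − f̂₁₂f̂₃₁, −∂_t f̂₃₁ + ∂_x f̂₃₂ = f̂₁₁f̂₂₂ − f̂₁₂f̂₂₁. -/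
lemma diff_px {u : ℝ × ℝ → ℝ} {U : Set (ℝ × ℝ)} (hU : IsOpen U) (hu : ContDiffOn ℝ (⊤ : ℕ∞) u U)
    {p : ℝ × ℝ} (hp : p ∈ U) : DifferentiableAt ℝ (px u) p := by
  have h : ContDiffAt ℝ (⊤ : ℕ∞) u p := hu.contDiffAt (hU.mem_nhds hp)
  have h1 : ContDiffAt ℝ 1 (fderiv ℝ u) p := h.fderiv_right (WithTop.coe_le_coe.mpr le_top)
  exact ((ContinuousLinearMap.apply ℝ ℝ ((1:ℝ), (0:ℝ))).differentiable.differentiableAt).comp p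
    (h1.differentiableAt one_ne_zero)

lemma pt_comb {f g : ℝ × ℝ → ℝ} {p : ℝ × ℝ} (a b : ℝ)
    (hf : DifferentiableAt ℝ f p) (hg : DifferentiableAt ℝ g p) :
    pt (fun q => a * f q - b * g q) p = a * pt f p - b * pt g p := by
  simp [pt, fderiv_fun_sub (hf.const_mul a) (hg.const_mul b), fderiv_const_mul hf,
    fderiv_const_mul hg]

lemma px_comb {f g : ℝ × ℝ → ℝ} {p : ℝ × ℝ} (a b : ℝ)
    (hf : DifferentiableAt ℝ f p) (hg : DifferentiableAt ℝ g p) :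
    px (fun q => a * f q - b * g q) p = a * px f p - b * px g p := by
  simp [px, fderiv_fun_sub (hf.const_mul a) (hg.const_mul b), fderiv_const_mul hf,
    fderiv_const_mul hg]

lemma px_sq_sum {f g : ℝ × ℝ → ℝ} {p : ℝ × ℝ}
    (hf : DifferentiableAt ℝ f p) (hg : DifferentiableAt ℝ g p) (c : ℝ) :
    px (fun q => c - 2 * (f q ^ 2 + g q ^ 2)) p
      = -(2 * (2 * f p * px f p + 2 * g p * px g p)) := by
  have hrw : (fun q => c - 2 * (f q ^ 2 + g q ^ 2))
      = fun q => c - 2 * (f q * f q + g q * g q) := by funext q; ring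
  have hf2 : DifferentiableAt ℝ (fun q => f q * f q) p := hf.mul hf
  have hg2 : DifferentiableAt ℝ (fun q => g q * g q) p := hg.mul hg
  have hsum : DifferentiableAt ℝ (fun q => f q * f q + g q * g q) p := hf2.add hg2
  rw [hrw]
  simp only [px, fderiv_const_sub, fderiv_const_mul hsum,
    fderiv_fun_add hf2 hg2, fderiv_fun_mul hf hf, fderiv_fun_mul hg hg]
  simp; ring

/-- Every smooth solution of the nonlinear Schrödinger system provides, via the
stated associated functions with parameter `η`, a solution of the structure
equations with `δ = 1` (pseudo-spherical surfaces). -/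
theorem NLS_describes_pss (η : ℝ) (U : Set (ℝ × ℝ)) (hU : IsOpen U)
    (u v : ℝ × ℝ → ℝ) (hu : ContDiffOn ℝ (⊤ : ℕ∞) u U) (hv : ContDiffOn ℝ (⊤ : ℕ∞) v U)
    (hsys : ∀ p ∈ U,
      pt u p + px (px v) p - 2 * (u p ^ 2 + v p ^ 2) * v p = 0 ∧
      -(pt v p) + px (px u) p - 2 * (u p ^ 2 + v p ^ 2) * u p = 0) :
    StructEqs 1
      (fun p => 2 * u p)
      (fun p => -4 * η * u p - 2 * px v p)
      (fun p => -2 * v p)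
      (fun p => 4 * η * v p - 2 * px u p)
      (fun _ => 2 * η)
      (fun p => -4 * η ^ 2 - 2 * (u p ^ 2 + v p ^ 2))
      U := by
  intro p hp
  have hup : DifferentiableAt ℝ u p :=
    (hu.contDiffAt (hU.mem_nhds hp)).differentiableAt (by simp)
  have hvp : DifferentiableAt ℝ v p :=
    (hv.contDiffAt (hU.mem_nhds hp)).differentiableAt (by simp)
  have hpxup : DifferentiableAt ℝ (px u) p := diff_px hU hu hp
  have hpxvp : DifferentiableAt ℝ (px v) p := diff_px hU hv hp
  obtain ⟨hs1, hs2⟩ := hsys p hp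
  have e11t : pt (fun q => 2 * u q) p = 2 * pt u p := by
    have := pt_comb (f := u) (g := u) 2 0 hup hup; simpa using this
  have e21t : pt (fun q => -2 * v q) p = -2 * pt v p := by
    have := pt_comb (f := v) (g := v) (-2) 0 hvp hvp; simpa using this
  have e12x : px (fun q => -4 * η * u q - 2 * px v q) p
      = -4 * η * px u p - 2 * px (px v) p := px_comb _ _ hup hpxvp
  have e22x : px (fun q => 4 * η * v q - 2 * px u q) p
      = 4 * η * px v p - 2 * px (px u) p := px_comb _ _ hvp hpxup
  have e31t : pt (fun _ : ℝ × ℝ => 2 * η) p = 0 := by simp [pt]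
  have e32x : px (fun q => -4 * η ^ 2 - 2 * (u q ^ 2 + v q ^ 2)) p
      = -(2 * (2 * u p * px u p + 2 * v p * px v p)) := px_sq_sum hup hvp _
  refine ⟨?_, ?_, ?_⟩
  · rw [e11t, e12x]; linear_combination (-2 : ℝ) * hs1
  · rw [e21t, e22x]; linear_combination (-2 : ℝ) * hs2
  · rw [e31t, e32x]; ring
end

section
/- Let U ⊆ ℝ² be open, let f_{ij} : U → ℝ (i = 1,2,3; j = 1,2) be smooth, and let Γ : U → ℝ be a smooth solution of the Riccati system Γ_x = ½(f₁₁ + f₃₁) − f₂₁Γ + ½(−f₁₁ + f₃₁)Γ² and Γ_t = ½(f₁₂ + f₃₂) − f₂₂Γ + ½(−f₁₂ + f₃₂)Γ². Then at every point of U, Γ_xt − Γ_tx = −½(R₁ + R₃) + R₂·Γ − ½(R₃ − R₁)·Γ², where R₁ = −∂_t f₁₁ + ∂_x f₁₂ − (f₃₁f₂₂ − f₃₂f₂₁), R₂ = −∂_t f₂₁ + ∂_x f₂₂ − (f₁₁f₃₂ − f₁₂f₃₁), R₃ = −∂_t f₃₁ + ∂_x f₃₂ − (f₁₁f₂₂ −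 f₁₂f₂₁). In particular, if the f_{ij} satisfy the local structure equations with δ = 1 (i.e., R₁ = R₂ = R₃ = 0 on U), then Γ_xt = Γ_tx on U. -/
lemma dv_mul {a b : ℝ × ℝ → ℝ} {p v : ℝ × ℝ}
    (ha : DifferentiableAt ℝ a p) (hb : DifferentiableAt ℝ b p) :
    fderiv ℝ (fun q => a q * b q) p v = fderiv ℝ a p v * b p + a p * fderiv ℝ b p v := by
  rw [fderiv_fun_mul ha hb]
  simp only [ContinuousLinearMap.add_apply, ContinuousLinearMap.smul_apply, smul_eq_mul]
  ring

lemma dv_comb {a b c G : ℝ × ℝ → ℝ} {p v : ℝ × ℝ}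
    (ha : DifferentiableAt ℝ a p) (hb : DifferentiableAt ℝ b p)
    (hc : DifferentiableAt ℝ c p) (hG : DifferentiableAt ℝ G p) :
    fderiv ℝ (fun q => (1/2) * (a q + c q) - b q * G q + (1/2) * (-(a q) + c q) * G q ^ 2) p v
      = (1/2) * (fderiv ℝ a p v + fderiv ℝ c p v)
        - (fderiv ℝ b p v * G p + b p * fderiv ℝ G p v)
        + ((1/2) * (-(fderiv ℝ a p v) + fderiv ℝ c p v) * G p ^ 2
          + (1/2) * (-(a p) + c p) * (2 * G p * fderiv ℝ G p v)) := by
  have h1 : DifferentiableAt ℝ (fun q => (1/2 : ℝ) * (a q + c q)) p :=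
    ((ha.add hc).const_mul _)
  have h2 : DifferentiableAt ℝ (fun q => b q * G q) p := hb.mul hG
  have h3 : DifferentiableAt ℝ (fun q => (1/2 : ℝ) * (-(a q) + c q)) p :=
    ((ha.neg.add hc).const_mul _)
  have hG2 : DifferentiableAt ℝ (fun q => G q ^ 2) p := hG.pow 2
  have h4 : DifferentiableAt ℝ (fun q => (1/2 : ℝ) * (-(a q) + c q) * G q ^ 2) p :=
    h3.mul hG2
  rw [fderiv_fun_add (h1.fun_sub h2) h4, fderiv_fun_sub h1 h2]
  simp only [ContinuousLinearMap.add_apply, ContinuousLinearMap.sub_apply]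
  rw [dv_mul hb hG, dv_mul h3 hG2]
  have e1 : fderiv ℝ (fun q => (1/2 : ℝ) * (a q + c q)) p v
      = (1/2) * (fderiv ℝ a p v + fderiv ℝ c p v) := by
    rw [fderiv_const_mul (ha.fun_add hc), fderiv_fun_add ha hc]; simp; ring
  have e3 : fderiv ℝ (fun q => (1/2 : ℝ) * (-(a q) + c q)) p v
      = (1/2) * (-(fderiv ℝ a p v) + fderiv ℝ c p v) := by
    rw [fderiv_const_mul (ha.fun_neg.fun_add hc), fderiv_fun_add ha.fun_neg hc, fderiv_fun_neg]; simp; ring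
  have e2 : fderiv ℝ (fun q => G q ^ 2) p v = 2 * G p * fderiv ℝ G p v := by
    have : (fun q => G q ^ 2) = fun q => G q * G q := by funext q; ring
    rw [this, dv_mul hG hG]
    ring
  rw [e1, e3, e2]

/-- For a smooth solution `Γ` of the Riccati system associated with the six
functions `f i j`, the commutator of mixed partial derivatives `Γ_xt - Γ_tx`
is the stated quadratic polynomial in `Γ` whose coefficients are the defects
`R₁, R₂, R₃` of the structure equations (with `δ = 1`); in particular if the
structure equations hold on `U` then `Γ_xt = Γ_tx` on `U`. -/
theorem riccati_integrability (U : Set (ℝ × ℝ)) (hU : IsOpen U)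
    (f11 f12 f21 f22 f31 f32 : ℝ × ℝ → ℝ)
    (hf11 : ContDiffOn ℝ (⊤ : ℕ∞) f11 U) (hf12 : ContDiffOn ℝ (⊤ : ℕ∞) f12 U)
    (hf21 : ContDiffOn ℝ (⊤ : ℕ∞) f21 U) (hf22 : ContDiffOn ℝ (⊤ : ℕ∞) f22 U)
    (hf31 : ContDiffOn ℝ (⊤ : ℕ∞) f31 U) (hf32 : ContDiffOn ℝ (⊤ : ℕ∞) f32 U)
    (Γ : ℝ × ℝ → ℝ) (hΓ : ContDiffOn ℝ (⊤ : ℕ∞) Γ U)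
    (hx : ∀ p ∈ U, px Γ p =
      (1 / 2) * (f11 p + f31 p) - f21 p * Γ p + (1 / 2) * (-(f11 p) + f31 p) * Γ p ^ 2)
    (ht : ∀ p ∈ U, pt Γ p =
      (1 / 2) * (f12 p + f32 p) - f22 p * Γ p + (1 / 2) * (-(f12 p) + f32 p) * Γ p ^ 2) :
    (∀ p ∈ U,
      pt (px Γ) p - px (pt Γ) p =
        -(1 / 2) * ((-(pt f11 p) + px f12 p - (f31 p * f22 p - f32 p * f21 p))
            + (-(pt f31 p) + px f32 p - (f11 p * f22 p - f12 p * f21 p)))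
        + (-(pt f21 p) + px f22 p - (f11 p * f32 p - f12 p * f31 p)) * Γ p
        - (1 / 2) * ((-(pt f31 p) + px f32 p - (f11 p * f22 p - f12 p * f21 p))
            - (-(pt f11 p) + px f12 p - (f31 p * f22 p - f32 p * f21 p))) * Γ p ^ 2) ∧
    ((∀ p ∈ U,
        -(pt f11 p) + px f12 p = f31 p * f22 p - f32 p * f21 p ∧
        -(pt f21 p) + px f22 p = f11 p * f32 p - f12 p * f31 p ∧
        -(pt f31 p) + px f32 p = f11 p * f22 p - f12 p * f21 p) →
      ∀ p ∈ U, pt (px Γ) p = px (pt Γ) p) := by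
  have key : ∀ p ∈ U,
      pt (px Γ) p - px (pt Γ) p =
        -(1 / 2) * ((-(pt f11 p) + px f12 p - (f31 p * f22 p - f32 p * f21 p))
            + (-(pt f31 p) + px f32 p - (f11 p * f22 p - f12 p * f21 p)))
        + (-(pt f21 p) + px f22 p - (f11 p * f32 p - f12 p * f31 p)) * Γ p
        - (1 / 2) * ((-(pt f31 p) + px f32 p - (f11 p * f22 p - f12 p * f21 p))
            - (-(pt f11 p) + px f12 p - (f31 p * f22 p - f32 p * f21 p))) * Γ p ^ 2 := by
    intro p hp
    have hpU : U ∈ nhds p := hU.mem_nhds hp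
    have d11 : DifferentiableAt ℝ f11 p := (hf11.contDiffAt hpU).differentiableAt (by simp)
    have d12 : DifferentiableAt ℝ f12 p := (hf12.contDiffAt hpU).differentiableAt (by simp)
    have d21 : DifferentiableAt ℝ f21 p := (hf21.contDiffAt hpU).differentiableAt (by simp)
    have d22 : DifferentiableAt ℝ f22 p := (hf22.contDiffAt hpU).differentiableAt (by simp)
    have d31 : DifferentiableAt ℝ f31 p := (hf31.contDiffAt hpU).differentiableAt (by simp)
    have d32 : DifferentiableAt ℝ f32 p := (hf32.contDiffAt hpU).differentiableAt (by simp)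
    have dΓ : DifferentiableAt ℝ Γ p := (hΓ.contDiffAt hpU).differentiableAt (by simp)
    have hxq : px Γ =ᶠ[nhds p] fun q =>
        (1 / 2) * (f11 q + f31 q) - f21 q * Γ q + (1 / 2) * (-(f11 q) + f31 q) * Γ q ^ 2 :=
      Filter.eventuallyEq_of_mem hpU hx
    have htq : pt Γ =ᶠ[nhds p] fun q =>
        (1 / 2) * (f12 q + f32 q) - f22 q * Γ q + (1 / 2) * (-(f12 q) + f32 q) * Γ q ^ 2 :=
      Filter.eventuallyEq_of_mem hpU ht
    have A : pt (px Γ) p =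
        (1 / 2) * (pt f11 p + pt f31 p) - (pt f21 p * Γ p + f21 p * pt Γ p)
          + ((1 / 2) * (-(pt f11 p) + pt f31 p) * Γ p ^ 2
            + (1 / 2) * (-(f11 p) + f31 p) * (2 * Γ p * pt Γ p)) := by
      show fderiv ℝ (px Γ) p (0, 1) = _
      rw [hxq.fderiv_eq]
      exact dv_comb d11 d21 d31 dΓ
    have B : px (pt Γ) p =
        (1 / 2) * (px f12 p + px f32 p) - (px f22 p * Γ p + f22 p * px Γ p)
          + ((1 / 2) * (-(px f12 p) + px f32 p) * Γ p ^ 2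
            + (1 / 2) * (-(f12 p) + f32 p) * (2 * Γ p * px Γ p)) := by
      show fderiv ℝ (pt Γ) p (1, 0) = _
      rw [htq.fderiv_eq]
      exact dv_comb d12 d22 d32 dΓ
    rw [A, B, ht p hp, hx p hp]
    ring
  refine ⟨key, fun h p hp => ?_⟩
  obtain ⟨r1, r2, r3⟩ := h p hp
  have := key p hp
  rw [r1, r2, r3] at this
  have h0 : pt (px Γ) p - px (pt Γ) p = 0 := by rw [this]; ring
  linarith
end

section
/- Let λ₁, λ₂ be real constants and U ⊆ ℝ² open. Let (u, v) be a smooth solution of the coupled KdV system u_t = −u_xxx + 6uvu_x, v_t = −v_xxx + 6uvv_x on U, and let φ, ψ : U → ℝ be smooth with φ ≠ 0 and ψ ≠ 0 on U, satisfying: φ_x = u(ψ² − φ²) + λ₁ψ − λ₂φ + v; ψ_x = −2uφψ − λ₁φ − λ₂ψ; φ_t = [u_xx + λ₂u_x − 2vu² + (λ₂² − λ₁²)u](φ² − ψ²) − 2λ₁(2λ₂u + u_x)φψ + [λ₂(−2uv − 3λ₁² + λ₂²) + 2(uv_x − vu_x)]φ + λ₁(2uv + λ₁² − 3λ₂²)ψ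 − v_xx + λ₂v_x + 2uv² + (λ₁² − λ₂²)v; ψ_t = λ₁(2λ₂u + u_x)(φ² − ψ²) + 2[u_xx + λ₂u_x − 2vu² + (λ₂² − λ₁²)u]φψ − λ₁(2uv + λ₁² − 3λ₂²)φ + [−λ₂(2uv + 3λ₁² − λ₂²) + 2(uv_x − vu_x)]ψ + λ₁(v_x − 2vλ₂). Then the functions u′ := u + λ₁/ψ and v′ := v + λ₁(φ² + ψ²)/ψ form a solution of the coupled KdV system on U: u′_t = −u′_xxx + 6u′v′u′_x and v′_t = −v′_xxx + 6u′v′v′_x. -/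
noncomputable def pd (w : ℝ × ℝ) (f : ℝ × ℝ → ℝ) : ℝ × ℝ → ℝ := fun p => fderiv ℝ f p w

theorem px_eq_pd : px = pd (1, 0) := rfl
theorem pt_eq_pd : pt = pd (0, 1) := rfl

section pdlemmas
variable {w : ℝ × ℝ} {f g : ℝ × ℝ → ℝ} {p : ℝ × ℝ}

theorem pd_add (hf : DifferentiableAt ℝ f p) (hg : DifferentiableAt ℝ g p) :
    pd w (fun q => f q + g q) p = pd w f p + pd w g p := by
  simp [pd, fderiv_fun_add hf hg]

theorem pd_sub (hf : DifferentiableAt ℝ f p) (hg : DifferentiableAt ℝ g p) :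
    pd w (fun q => f q - g q) p = pd w f p - pd w g p := by
  simp [pd, fderiv_fun_sub hf hg]

theorem pd_neg : pd w (fun q => -f q) p = -pd w f p := by
  simp [pd, fderiv_neg]

theorem pd_mul (hf : DifferentiableAt ℝ f p) (hg : DifferentiableAt ℝ g p) :
    pd w (fun q => f q * g q) p = f p * pd w g p + g p * pd w f p := by
  simp [pd, fderiv_fun_mul hf hg]

theorem pd_const (c : ℝ) : pd w (fun _ => c) p = 0 := by
  simp [pd, fderiv_const]

theorem pd_inv (hf : DifferentiableAt ℝ f p) (h0 : f p ≠ 0) :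
    pd w (fun q => (f q)⁻¹) p = -pd w f p * ((f p)⁻¹ ^ 2) := by
  have h := (hasDerivAt_inv h0).comp_hasFDerivAt p hf.hasFDerivAt
  have h2 : fderiv ℝ (fun q => (f q)⁻¹) p = -(f p ^ 2)⁻¹ • fderiv ℝ f p := h.fderiv
  simp only [pd, h2]
  simp [pow_two, mul_inv]
  ring

theorem pd_pow (hf : DifferentiableAt ℝ f p) (n : ℕ) :
    pd w (fun q => f q ^ n) p = n * f p ^ (n - 1) * pd w f p := by
  induction n with
  | zero => simpa using pd_const (w := w) (p := p) 1
  | succ m ih =>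
    have : (fun q => f q ^ (m + 1)) = fun q => f q ^ m * f q := by
      funext q; rw [pow_succ]
    rw [this, pd_mul (f := fun q => f q ^ m) (hf.pow m) hf, ih]
    cases m with
    | zero => simp
    | succ k => simp [pow_succ]; ring

end pdlemmas

theorem pd_congrOn {U : Set (ℝ × ℝ)} (hU : IsOpen U) {f g : ℝ × ℝ → ℝ}
    (h : ∀ q ∈ U, f q = g q) {p : ℝ × ℝ} (hp : p ∈ U) (w : ℝ × ℝ) :
    pd w f p = pd w g p := by
  unfold pd
  rw [Filter.EventuallyEq.fderiv_eq (Filter.eventuallyEq_of_mem (hU.mem_nhds hp) h)]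

theorem contDiffOn_pd {U : Set (ℝ × ℝ)} (hU : IsOpen U) {f : ℝ × ℝ → ℝ}
    (hf : ContDiffOn ℝ (⊤ : ℕ∞) f U) (w : ℝ × ℝ) : ContDiffOn ℝ (⊤ : ℕ∞) (pd w f) U := by
  have h1 : ContDiffOn ℝ (⊤ : ℕ∞) (fderiv ℝ f) U := hf.fderiv_of_isOpen hU (by simp)
  exact h1.clm_apply contDiffOn_const

-- smoothness of px
theorem contDiffOn_px {U : Set (ℝ × ℝ)} (hU : IsOpen U) {f : ℝ × ℝ → ℝ}
    (hf : ContDiffOn ℝ (⊤ : ℕ∞) f U) : ContDiffOn ℝ (⊤ : ℕ∞) (px f) U := by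
  have h1 : ContDiffOn ℝ (⊤ : ℕ∞) (fderiv ℝ f) U := hf.fderiv_of_isOpen hU (by simp)
  exact h1.clm_apply contDiffOn_const


set_option maxHeartbeats 2000000 in
/-- Alternative form of the Bäcklund transformation for the coupled KdV system:
if `(u, v)` is a solution and `(φ, ψ)` solves the associated first-order
(Riccati) system with `φ, ψ` nonvanishing, then
`u' = u + λ₁/ψ`, `v' = v + λ₁(φ² + ψ²)/ψ` is again a solution. -/
theorem backlund_coupledKdV_alt (lam1 lam2 : ℝ) (U : Set (ℝ × ℝ)) (hU : IsOpen U)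
    (u v φ ψ : ℝ × ℝ → ℝ)
    (hu : ContDiffOn ℝ (⊤ : ℕ∞) u U) (hv : ContDiffOn ℝ (⊤ : ℕ∞) v U)
    (hφ : ContDiffOn ℝ (⊤ : ℕ∞) φ U) (hψ : ContDiffOn ℝ (⊤ : ℕ∞) ψ U)
    (hφ0 : ∀ p ∈ U, φ p ≠ 0) (hψ0 : ∀ p ∈ U, ψ p ≠ 0)
    (hsol : ∀ p ∈ U,
      pt u p = -(px (px (px u)) p) + 6 * u p * v p * px u p ∧
      pt v p = -(px (px (px v)) p) + 6 * u p * v p * px v p)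
    (hφx : ∀ p ∈ U, px φ p =
      u p * (ψ p ^ 2 - φ p ^ 2) + lam1 * ψ p - lam2 * φ p + v p)
    (hψx : ∀ p ∈ U, px ψ p =
      -(2 * u p * φ p * ψ p) - lam1 * φ p - lam2 * ψ p)
    (hφt : ∀ p ∈ U, pt φ p =
      (px (px u) p + lam2 * px u p - 2 * v p * u p ^ 2 + (lam2 ^ 2 - lam1 ^ 2) * u p)
          * (φ p ^ 2 - ψ p ^ 2)
        - 2 * lam1 * (2 * lam2 * u p + px u p) * φ p * ψ p
        + (lam2 * (-(2 * u p * v p) - 3 * lam1 ^ 2 + lam2 ^ 2)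
            + 2 * (u p * px v p - v p * px u p)) * φ p
        + lam1 * (2 * u p * v p + lam1 ^ 2 - 3 * lam2 ^ 2) * ψ p
        - px (px v) p + lam2 * px v p + 2 * u p * v p ^ 2 + (lam1 ^ 2 - lam2 ^ 2) * v p)
    (hψt : ∀ p ∈ U, pt ψ p =
      lam1 * (2 * lam2 * u p + px u p) * (φ p ^ 2 - ψ p ^ 2)
        + 2 * (px (px u) p + lam2 * px u p - 2 * v p * u p ^ 2
            + (lam2 ^ 2 - lam1 ^ 2) * u p) * φ p * ψ p
        - lam1 * (2 * u p * v p + lam1 ^ 2 - 3 * lam2 ^ 2) * φ p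
        + (-(lam2 * (2 * u p * v p + 3 * lam1 ^ 2 - lam2 ^ 2))
            + 2 * (u p * px v p - v p * px u p)) * ψ p
        + lam1 * (px v p - 2 * v p * lam2)) :
    ∀ p ∈ U,
      pt (fun q => u q + lam1 / ψ q) p
        = -(px (px (px (fun q => u q + lam1 / ψ q))) p)
          + 6 * (u p + lam1 / ψ p) * (v p + lam1 * (φ p ^ 2 + ψ p ^ 2) / ψ p)
            * px (fun q => u q + lam1 / ψ q) p ∧
      pt (fun q => v q + lam1 * (φ q ^ 2 + ψ q ^ 2) / ψ q) p
        = -(px (px (px (fun q => v q + lam1 * (φ q ^ 2 + ψ q ^ 2) / ψ q))) p)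
          + 6 * (u p + lam1 / ψ p) * (v p + lam1 * (φ p ^ 2 + ψ p ^ 2) / ψ p)
            * px (fun q => v q + lam1 * (φ q ^ 2 + ψ q ^ 2) / ψ q) p := by
  intro p hp
  simp only [px_eq_pd, pt_eq_pd] at hsol hφx hψx hφt hψt ⊢
  have hGu : (fun q => u q + lam1 / ψ q) = (fun z => u z + lam1 * (ψ z)⁻¹) := by
    funext z; rw [div_eq_mul_inv]
  have hGv : (fun q => v q + lam1 * (φ q ^ 2 + ψ q ^ 2) / ψ q)
      = (fun z => v z + lam1 * (φ z ^ 2 + ψ z ^ 2) * (ψ z)⁻¹) := by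
    funext z; rw [div_eq_mul_inv]
  rw [hGu, hGv]
  have DD : ∀ (g : ℝ × ℝ → ℝ), ContDiffOn ℝ (⊤ : ℕ∞) g U → ∀ q ∈ U, DifferentiableAt ℝ g q :=
    fun g hg q hq => (hg.contDiffAt (hU.mem_nhds hq)).differentiableAt (by simp)
  have cu1 : ContDiffOn ℝ (⊤ : ℕ∞) (pd (1,0) u) U := contDiffOn_pd hU hu (1,0)
  have cu2 : ContDiffOn ℝ (⊤ : ℕ∞) (pd (1,0) (pd (1,0) u)) U := contDiffOn_pd hU cu1 (1,0)
  have cv1 : ContDiffOn ℝ (⊤ : ℕ∞) (pd (1,0) v) U := contDiffOn_pd hU hv (1,0)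
  have cv2 : ContDiffOn ℝ (⊤ : ℕ∞) (pd (1,0) (pd (1,0) v)) U := contDiffOn_pd hU cv1 (1,0)
  have h1u : ∀ q ∈ U, pd (1,0) (fun z => u z + lam1 * (ψ z)⁻¹) q = (((1:ℝ) * (ψ q) * lam1 * lam2 + (1:ℝ) * (φ q) * lam1 ^ 2 + (1:ℝ) * (pd (1,0) u q) * (ψ q) ^ 2 + (2:ℝ) * (u q) * (φ q) * (ψ q) * lam1) * (ψ q)⁻¹ ^ 2) := by
    intro q hq
    have d1 : DifferentiableAt ℝ u q := DD u hu q hq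
    have d2 : DifferentiableAt ℝ v q := DD v hv q hq
    have d3 : DifferentiableAt ℝ φ q := DD φ hφ q hq
    have d4 : DifferentiableAt ℝ ψ q := DD ψ hψ q hq
    have d5 : DifferentiableAt ℝ (pd (1,0) u) q := DD _ cu1 q hq
    have d6 : DifferentiableAt ℝ (pd (1,0) (pd (1,0) u)) q := DD _ cu2 q hq
    have d7 : DifferentiableAt ℝ (pd (1,0) v) q := DD _ cv1 q hq
    have d8 : DifferentiableAt ℝ (pd (1,0) (pd (1,0) v)) q := DD _ cv2 q hq
    have d0 : ψ q ≠ 0 := hψ0 q hq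
    simp (disch := first | assumption | fun_prop (disch := assumption)) only [pd_add, pd_sub, pd_neg, pd_mul, pd_pow, pd_inv, pd_const]
    simp only [hφx q hq, hψx q hq]
    field_simp
    ring
  have h2u : ∀ q ∈ U, pd (1,0) (pd (1,0) (fun z => u z + lam1 * (ψ z)⁻¹)) q = (((1:ℝ) * (ψ q) ^ 2 * lam1 * lam2 ^ 2 + (1:ℝ) * (ψ q) ^ 2 * lam1 ^ 3 + (2:ℝ) * (φ q) * (ψ q) * lam1 ^ 2 * lam2 + (2:ℝ) * (φ q) ^ 2 * lam1 ^ 3 + (1:ℝ) * (v q) * (ψ q) * lam1 ^ 2 + (1:ℝ) * (pd (1,0) (pd (1,0) u) q) * (ψ q) ^ 3 + (2:ℝ) * (pd (1,0) u q) * (φ q) * (ψ q) ^ 2 * lam1 + (3:ℝ) * (u q) * (ψ q) ^ 3 * lam1 ^ 2 + (2:ℝ) * (u q) * (φ q) * (ψ q) ^ 2 * lam1 * lam2 + (5:ℝ) * (u q) * (φ q) ^ 2 * (ψ q) * lam1 ^ 2 + (2:ℝ) * (u q) * (v q) * (ψ q) ^ 2 * lam1 + (2:ℝ) * (u q) ^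 2 * (ψ q) ^ 4 * lam1 + (2:ℝ) * (u q) ^ 2 * (φ q) ^ 2 * (ψ q) ^ 2 * lam1) * (ψ q)⁻¹ ^ 3) := by
    intro q hq
    have d1 : DifferentiableAt ℝ u q := DD u hu q hq
    have d2 : DifferentiableAt ℝ v q := DD v hv q hq
    have d3 : DifferentiableAt ℝ φ q := DD φ hφ q hq
    have d4 : DifferentiableAt ℝ ψ q := DD ψ hψ q hq
    have d5 : DifferentiableAt ℝ (pd (1,0) u) q := DD _ cu1 q hq
    have d6 : DifferentiableAt ℝ (pd (1,0) (pd (1,0) u)) q := DD _ cu2 q hq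
    have d7 : DifferentiableAt ℝ (pd (1,0) v) q := DD _ cv1 q hq
    have d8 : DifferentiableAt ℝ (pd (1,0) (pd (1,0) v)) q := DD _ cv2 q hq
    have d0 : ψ q ≠ 0 := hψ0 q hq
    rw [pd_congrOn hU h1u hq (1,0)]
    simp (disch := first | assumption | fun_prop (disch := assumption)) only [pd_add, pd_sub, pd_neg, pd_mul, pd_pow, pd_inv, pd_const]
    simp only [hφx q hq, hψx q hq]
    simp only [Nat.reduceSub, Nat.cast_ofNat, pow_one]
    field_simp
    ring
  have h3u : ∀ q ∈ U, pd (1,0) (pd (1,0) (pd (1,0) (fun z => u z + lam1 * (ψ z)⁻¹))) q = (((1:ℝ) * (ψ q) ^ 3 * lam1 * lam2 ^ 3 + (3:ℝ) * (ψ q) ^ 3 * lam1 ^ 3 * lam2 + (3:ℝ) * (φ q) * (ψ q) ^ 2 * lam1 ^ 2 * lam2 ^ 2 + (5:ℝ) * (φ q) * (ψ q) ^ 2 * lam1 ^ 4 + (6:ℝ) * (φ q) ^ 2 * (ψ q) * lam1 ^ 3 * lam2 + (6:ℝ) * (φ q) ^ 3 * lam1 ^ 4 + (1:ℝ) * (pd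 (1,0) v q) * (ψ q) ^ 2 * lam1 ^ 2 + (4:ℝ) * (v q) * (ψ q) ^ 2 * lam1 ^ 2 * lam2 + (6:ℝ) * (v q) * (φ q) * (ψ q) * lam1 ^ 3 + (1:ℝ) * (pd (1,0) (pd (1,0) (pd (1,0) u)) q) * (ψ q) ^ 4 + (2:ℝ) * (pd (1,0) (pd (1,0) u) q) * (φ q) * (ψ q) ^ 3 * lam1 + (5:ℝ) * (pd (1,0) u q) * (ψ q) ^ 4 * lam1 ^ 2 + (2:ℝ) * (pd (1,0) u q) * (φ q) * (ψ q) ^ 3 * lam1 * lam2 + (7:ℝ) * (pd (1,0) u q) * (φ q) ^ 2 * (ψ q) ^ 2 * lam1 ^ 2 + (4:ℝ) * (pd (1,0) u q) * (v q) * (ψ q) ^ 3 * lam1 + (4:ℝ) * (u q) * (ψ q) ^ 4 * lam1 ^ 2 * lam2 + (2:ℝ) * (u q) * (φ q) * (ψ q) ^ 3 * lam1 * lam2 ^ 2 + (16:ℝ) * (u q) * (φ q) * (ψ q) ^ 3 * lam1 ^ 3 + (8:ℝ) * (u q) * (φ q) ^ 2 * (ψ q) ^ 2 * lam1 ^ 2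 * lam2 + (18:ℝ) * (u q) * (φ q) ^ 3 * (ψ q) * lam1 ^ 3 + (2:ℝ) * (u q) * (pd (1,0) v q) * (ψ q) ^ 3 * lam1 + (4:ℝ) * (u q) * (v q) * (ψ q) ^ 3 * lam1 * lam2 + (16:ℝ) * (u q) * (v q) * (φ q) * (ψ q) ^ 2 * lam1 ^ 2 + (6:ℝ) * (u q) * (pd (1,0) u q) * (ψ q) ^ 5 * lam1 + (6:ℝ) * (u q) * (pd (1,0) u q) * (φ q) ^ 2 * (ψ q) ^ 3 * lam1 + (12:ℝ) * (u q) ^ 2 * (φ q) * (ψ q) ^ 4 * lam1 ^ 2 + (12:ℝ) * (u q) ^ 2 * (φ q) ^ 3 * (ψ q) ^ 2 * lam1 ^ 2 + (8:ℝ) * (u q) ^ 2 * (v q) * (φ q) * (ψ q) ^ 3 * lam1) * (ψ q)⁻¹ ^ 4) := by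
    intro q hq
    have d1 : DifferentiableAt ℝ u q := DD u hu q hq
    have d2 : DifferentiableAt ℝ v q := DD v hv q hq
    have d3 : DifferentiableAt ℝ φ q := DD φ hφ q hq
    have d4 : DifferentiableAt ℝ ψ q := DD ψ hψ q hq
    have d5 : DifferentiableAt ℝ (pd (1,0) u) q := DD _ cu1 q hq
    have d6 : DifferentiableAt ℝ (pd (1,0) (pd (1,0) u)) q := DD _ cu2 q hq
    have d7 : DifferentiableAt ℝ (pd (1,0) v) q := DD _ cv1 q hq
    have d8 : DifferentiableAt ℝ (pd (1,0) (pd (1,0) v)) q := DD _ cv2 q hq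
    have d0 : ψ q ≠ 0 := hψ0 q hq
    rw [pd_congrOn hU h2u hq (1,0)]
    simp (disch := first | assumption | fun_prop (disch := assumption)) only [pd_add, pd_sub, pd_neg, pd_mul, pd_pow, pd_inv, pd_const]
    simp only [hφx q hq, hψx q hq]
    simp only [Nat.reduceSub, Nat.cast_ofNat, pow_one]
    field_simp
    ring
  have htu : ∀ q ∈ U, pd (0,1) (fun z => u z + lam1 * (ψ z)⁻¹) q = (((-1:ℝ) * (ψ q) * lam1 * lam2 ^ 3 + (3:ℝ) * (ψ q) * lam1 ^ 3 * lam2 + (-3:ℝ) * (φ q) * lam1 ^ 2 * lam2 ^ 2 + (1:ℝ) * (φ q) * lam1 ^ 4 + (-1:ℝ) * (pd (1,0) v q) * lam1 ^ 2 + (2:ℝ) * (v q) * lam1 ^ 2 * lam2 + (-1:ℝ) * (pd (1,0) (pd (1,0) (pd (1,0) u)) q) * (ψ q) ^ 2 + (-2:ℝ) * (pd (1,0) (pd (1,0) u) q) * (φ q) * (ψ q) * lam1 + (1:ℝ) * (pd (1,0) u q) * (ψ q) ^ 2 * lam1 ^ 2 + (-2:ℝ) * (pd (1,0) u q) * (φ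 q) * (ψ q) * lam1 * lam2 + (-1:ℝ) * (pd (1,0) u q) * (φ q) ^ 2 * lam1 ^ 2 + (2:ℝ) * (pd (1,0) u q) * (v q) * (ψ q) * lam1 + (2:ℝ) * (u q) * (ψ q) ^ 2 * lam1 ^ 2 * lam2 + (-2:ℝ) * (u q) * (φ q) * (ψ q) * lam1 * lam2 ^ 2 + (2:ℝ) * (u q) * (φ q) * (ψ q) * lam1 ^ 3 + (-2:ℝ) * (u q) * (φ q) ^ 2 * lam1 ^ 2 * lam2 + (-2:ℝ) * (u q) * (pd (1,0) v q) * (ψ q) * lam1 + (2:ℝ) * (u q) * (v q) * (ψ q) * lam1 * lam2 + (2:ℝ) * (u q) * (v q) * (φ q) * lam1 ^ 2 + (6:ℝ) * (u q) * (pd (1,0) u q) * (v q) * (ψ q) ^ 2 + (4:ℝ) * (u q) ^ 2 * (v q) * (φ q) * (ψ q) * lam1) * (ψ q)⁻¹ ^ 2) := by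
    intro q hq
    have d1 : DifferentiableAt ℝ u q := DD u hu q hq
    have d2 : DifferentiableAt ℝ v q := DD v hv q hq
    have d3 : DifferentiableAt ℝ φ q := DD φ hφ q hq
    have d4 : DifferentiableAt ℝ ψ q := DD ψ hψ q hq
    have d5 : DifferentiableAt ℝ (pd (1,0) u) q := DD _ cu1 q hq
    have d6 : DifferentiableAt ℝ (pd (1,0) (pd (1,0) u)) q := DD _ cu2 q hq
    have d7 : DifferentiableAt ℝ (pd (1,0) v) q := DD _ cv1 q hq
    have d8 : DifferentiableAt ℝ (pd (1,0) (pd (1,0) v)) q := DD _ cv2 q hq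
    have d0 : ψ q ≠ 0 := hψ0 q hq
    simp (disch := first | assumption | fun_prop (disch := assumption)) only [pd_add, pd_sub, pd_neg, pd_mul, pd_pow, pd_inv, pd_const]
    simp only [(hsol q hq).1, (hsol q hq).2, hφt q hq, hψt q hq]
    field_simp
    ring
  have h1v : ∀ q ∈ U, pd (1,0) (fun z => v z + lam1 * (φ z ^ 2 + ψ z ^ 2) * (ψ z)⁻¹) q = (((-1:ℝ) * (ψ q) ^ 3 * lam1 * lam2 + (1:ℝ) * (φ q) * (ψ q) ^ 2 * lam1 ^ 2 + (-1:ℝ) * (φ q) ^ 2 * (ψ q) * lam1 * lam2 + (1:ℝ) * (φ q) ^ 3 * lam1 ^ 2 + (1:ℝ) * (pd (1,0) v q) * (ψ q) ^ 2 + (2:ℝ) * (v q) * (φ q) * (ψ q) * lam1) * (ψ q)⁻¹ ^ 2) := by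
    intro q hq
    have d1 : DifferentiableAt ℝ u q := DD u hu q hq
    have d2 : DifferentiableAt ℝ v q := DD v hv q hq
    have d3 : DifferentiableAt ℝ φ q := DD φ hφ q hq
    have d4 : DifferentiableAt ℝ ψ q := DD ψ hψ q hq
    have d5 : DifferentiableAt ℝ (pd (1,0) u) q := DD _ cu1 q hq
    have d6 : DifferentiableAt ℝ (pd (1,0) (pd (1,0) u)) q := DD _ cu2 q hq
    have d7 : DifferentiableAt ℝ (pd (1,0) v) q := DD _ cv1 q hq
    have d8 : DifferentiableAt ℝ (pd (1,0) (pd (1,0) v)) q := DD _ cv2 q hq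
    have d0 : ψ q ≠ 0 := hψ0 q hq
    simp (disch := first | assumption | fun_prop (disch := assumption)) only [pd_add, pd_sub, pd_neg, pd_mul, pd_pow, pd_inv, pd_const]
    simp only [hφx q hq, hψx q hq]
    field_simp
    ring
  have h2v : ∀ q ∈ U, pd (1,0) (pd (1,0) (fun z => v z + lam1 * (φ z ^ 2 + ψ z ^ 2) * (ψ z)⁻¹)) q = (((1:ℝ) * (ψ q) ^ 4 * lam1 * lam2 ^ 2 + (1:ℝ) * (ψ q) ^ 4 * lam1 ^ 3 + (-2:ℝ) * (φ q) * (ψ q) ^ 3 * lam1 ^ 2 * lam2 + (1:ℝ) * (φ q) ^ 2 * (ψ q) ^ 2 * lam1 * lam2 ^ 2 + (3:ℝ) * (φ q) ^ 2 * (ψ q) ^ 2 * lam1 ^ 3 + (-2:ℝ) * (φ q) ^ 3 * (ψ q) * lam1 ^ 2 * lam2 + (2:ℝ) * (φ q) ^ 4 * lam1 ^ 3 + (1:ℝ) * (pd (1,0) (pd (1,0) v) q) * (ψ q) ^ 3 + (2:ℝ) * (pd (1,0) v q) * (φ q) * (ψ q) ^ 2 * lam1 + (3:ℝ) * (v q)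 * (ψ q) ^ 3 * lam1 ^ 2 + (-2:ℝ) * (v q) * (φ q) * (ψ q) ^ 2 * lam1 * lam2 + (5:ℝ) * (v q) * (φ q) ^ 2 * (ψ q) * lam1 ^ 2 + (2:ℝ) * (v q) ^ 2 * (ψ q) ^ 2 * lam1 + (1:ℝ) * (u q) * (ψ q) ^ 5 * lam1 ^ 2 + (2:ℝ) * (u q) * (φ q) ^ 2 * (ψ q) ^ 3 * lam1 ^ 2 + (1:ℝ) * (u q) * (φ q) ^ 4 * (ψ q) * lam1 ^ 2 + (2:ℝ) * (u q) * (v q) * (ψ q) ^ 4 * lam1 + (2:ℝ) * (u q) * (v q) * (φ q) ^ 2 * (ψ q) ^ 2 * lam1) * (ψ q)⁻¹ ^ 3) := by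
    intro q hq
    have d1 : DifferentiableAt ℝ u q := DD u hu q hq
    have d2 : DifferentiableAt ℝ v q := DD v hv q hq
    have d3 : DifferentiableAt ℝ φ q := DD φ hφ q hq
    have d4 : DifferentiableAt ℝ ψ q := DD ψ hψ q hq
    have d5 : DifferentiableAt ℝ (pd (1,0) u) q := DD _ cu1 q hq
    have d6 : DifferentiableAt ℝ (pd (1,0) (pd (1,0) u)) q := DD _ cu2 q hq
    have d7 : DifferentiableAt ℝ (pd (1,0) v) q := DD _ cv1 q hq
    have d8 : DifferentiableAt ℝ (pd (1,0) (pd (1,0) v)) q := DD _ cv2 q hq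
    have d0 : ψ q ≠ 0 := hψ0 q hq
    rw [pd_congrOn hU h1v hq (1,0)]
    simp (disch := first | assumption | fun_prop (disch := assumption)) only [pd_add, pd_sub, pd_neg, pd_mul, pd_pow, pd_inv, pd_const]
    simp only [hφx q hq, hψx q hq]
    simp only [Nat.reduceSub, Nat.cast_ofNat, pow_one]
    field_simp
    ring
  have h3v : ∀ q ∈ U, pd (1,0) (pd (1,0) (pd (1,0) (fun z => v z + lam1 * (φ z ^ 2 + ψ z ^ 2) * (ψ z)⁻¹))) q = (((-1:ℝ) * (ψ q) ^ 5 * lam1 * lam2 ^ 3 + (-3:ℝ) * (ψ q) ^ 5 * lam1 ^ 3 * lam2 + (3:ℝ) * (φ q) * (ψ q) ^ 4 * lam1 ^ 2 * lam2 ^ 2 + (5:ℝ) * (φ q) * (ψ q) ^ 4 * lam1 ^ 4 + (-1:ℝ) * (φ q) ^ 2 * (ψ q) ^ 3 * lam1 * lam2 ^ 3 + (-9:ℝ) * (φ q) ^ 2 * (ψ q) ^ 3 * lam1 ^ 3 * lam2 + (3:ℝ) * (φ q) ^ 3 * (ψ q) ^ 2 * lam1 ^ 2 * lam2 ^ 2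 + (11:ℝ) * (φ q) ^ 3 * (ψ q) ^ 2 * lam1 ^ 4 + (-6:ℝ) * (φ q) ^ 4 * (ψ q) * lam1 ^ 3 * lam2 + (6:ℝ) * (φ q) ^ 5 * lam1 ^ 4 + (1:ℝ) * (pd (1,0) (pd (1,0) (pd (1,0) v)) q) * (ψ q) ^ 4 + (2:ℝ) * (pd (1,0) (pd (1,0) v) q) * (φ q) * (ψ q) ^ 3 * lam1 + (5:ℝ) * (pd (1,0) v q) * (ψ q) ^ 4 * lam1 ^ 2 + (-2:ℝ) * (pd (1,0) v q) * (φ q) * (ψ q) ^ 3 * lam1 * lam2 + (7:ℝ) * (pd (1,0) v q) * (φ q) ^ 2 * (ψ q) ^ 2 * lam1 ^ 2 + (-4:ℝ) * (v q) * (ψ q) ^ 4 * lam1 ^ 2 * lam2 + (2:ℝ) * (v q) * (φ q) * (ψ q) ^ 3 * lam1 * lam2 ^ 2 + (16:ℝ) * (v q) * (φ q) * (ψ q) ^ 3 * lam1 ^ 3 + (-8:ℝ) * (v q) * (φ q) ^ 2 * (ψ q) ^ 2 * lam1 ^ 2 * lam2 + (18:ℝ) * (v q) * (φ q) ^ 3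 * (ψ q) * lam1 ^ 3 + (6:ℝ) * (v q) * (pd (1,0) v q) * (ψ q) ^ 3 * lam1 + (12:ℝ) * (v q) ^ 2 * (φ q) * (ψ q) ^ 2 * lam1 ^ 2 + (1:ℝ) * (pd (1,0) u q) * (ψ q) ^ 6 * lam1 ^ 2 + (2:ℝ) * (pd (1,0) u q) * (φ q) ^ 2 * (ψ q) ^ 4 * lam1 ^ 2 + (1:ℝ) * (pd (1,0) u q) * (φ q) ^ 4 * (ψ q) ^ 2 * lam1 ^ 2 + (2:ℝ) * (pd (1,0) u q) * (v q) * (ψ q) ^ 5 * lam1 + (2:ℝ) * (pd (1,0) u q) * (v q) * (φ q) ^ 2 * (ψ q) ^ 3 * lam1 + (-4:ℝ) * (u q) * (ψ q) ^ 6 * lam1 ^ 2 * lam2 + (6:ℝ) * (u q) * (φ q) * (ψ q) ^ 5 * lam1 ^ 3 + (-8:ℝ) * (u q) * (φ q) ^ 2 * (ψ q) ^ 4 * lam1 ^ 2 * lam2 + (12:ℝ) * (u q) * (φ q) ^ 3 * (ψ q) ^ 3 * lam1 ^ 3 + (-4:ℝ) * (u q) * (φ q) ^ 4 * (ψ q)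 ^ 2 * lam1 ^ 2 * lam2 + (6:ℝ) * (u q) * (φ q) ^ 5 * (ψ q) * lam1 ^ 3 + (4:ℝ) * (u q) * (pd (1,0) v q) * (ψ q) ^ 5 * lam1 + (4:ℝ) * (u q) * (pd (1,0) v q) * (φ q) ^ 2 * (ψ q) ^ 3 * lam1 + (-4:ℝ) * (u q) * (v q) * (ψ q) ^ 5 * lam1 * lam2 + (16:ℝ) * (u q) * (v q) * (φ q) * (ψ q) ^ 4 * lam1 ^ 2 + (-4:ℝ) * (u q) * (v q) * (φ q) ^ 2 * (ψ q) ^ 3 * lam1 * lam2 + (16:ℝ) * (u q) * (v q) * (φ q) ^ 3 * (ψ q) ^ 2 * lam1 ^ 2 + (8:ℝ) * (u q) * (v q) ^ 2 * (φ q) * (ψ q) ^ 3 * lam1) * (ψ q)⁻¹ ^ 4) := by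
    intro q hq
    have d1 : DifferentiableAt ℝ u q := DD u hu q hq
    have d2 : DifferentiableAt ℝ v q := DD v hv q hq
    have d3 : DifferentiableAt ℝ φ q := DD φ hφ q hq
    have d4 : DifferentiableAt ℝ ψ q := DD ψ hψ q hq
    have d5 : DifferentiableAt ℝ (pd (1,0) u) q := DD _ cu1 q hq
    have d6 : DifferentiableAt ℝ (pd (1,0) (pd (1,0) u)) q := DD _ cu2 q hq
    have d7 : DifferentiableAt ℝ (pd (1,0) v) q := DD _ cv1 q hq
    have d8 : DifferentiableAt ℝ (pd (1,0) (pd (1,0) v)) q := DD _ cv2 q hq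
    have d0 : ψ q ≠ 0 := hψ0 q hq
    rw [pd_congrOn hU h2v hq (1,0)]
    simp (disch := first | assumption | fun_prop (disch := assumption)) only [pd_add, pd_sub, pd_neg, pd_mul, pd_pow, pd_inv, pd_const]
    simp only [hφx q hq, hψx q hq]
    simp only [Nat.reduceSub, Nat.cast_ofNat, pow_one]
    field_simp
    ring
  have htv : ∀ q ∈ U, pd (0,1) (fun z => v z + lam1 * (φ z ^ 2 + ψ z ^ 2) * (ψ z)⁻¹) q = (((1:ℝ) * (ψ q) ^ 3 * lam1 * lam2 ^ 3 + (-3:ℝ) * (ψ q) ^ 3 * lam1 ^ 3 * lam2 + (-3:ℝ) * (φ q) * (ψ q) ^ 2 * lam1 ^ 2 * lam2 ^ 2 + (1:ℝ) * (φ q) * (ψ q) ^ 2 * lam1 ^ 4 + (1:ℝ) * (φ q) ^ 2 * (ψ q) * lam1 * lam2 ^ 3 + (-3:ℝ) * (φ q) ^ 2 * (ψ q) * lam1 ^ 3 * lam2 + (-3:ℝ) * (φ q) ^ 3 * lam1 ^ 2 * lam2 ^ 2 + (1:ℝ) * (φ q) ^ 3 * lam1 ^ 4 + (-1:ℝ)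 * (pd (1,0) (pd (1,0) (pd (1,0) v)) q) * (ψ q) ^ 2 + (-2:ℝ) * (pd (1,0) (pd (1,0) v) q) * (φ q) * (ψ q) * lam1 + (1:ℝ) * (pd (1,0) v q) * (ψ q) ^ 2 * lam1 ^ 2 + (2:ℝ) * (pd (1,0) v q) * (φ q) * (ψ q) * lam1 * lam2 + (-1:ℝ) * (pd (1,0) v q) * (φ q) ^ 2 * lam1 ^ 2 + (-2:ℝ) * (v q) * (ψ q) ^ 2 * lam1 ^ 2 * lam2 + (-2:ℝ) * (v q) * (φ q) * (ψ q) * lam1 * lam2 ^ 2 + (2:ℝ) * (v q) * (φ q) * (ψ q) * lam1 ^ 3 + (2:ℝ) * (v q) * (φ q) ^ 2 * lam1 ^ 2 * lam2 + (-1:ℝ) * (pd (1,0) u q) * (ψ q) ^ 4 * lam1 ^ 2 + (-2:ℝ) * (pd (1,0) u q) * (φ q) ^ 2 * (ψ q) ^ 2 * lam1 ^ 2 + (-1:ℝ) * (pd (1,0) u q) * (φ q) ^ 4 * lam1 ^ 2 + (-2:ℝ) * (pd (1,0) u q) * (v q) * (ψ q) ^ 3 * lam1 + (-2:ℝ) *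 (pd (1,0) u q) * (v q) * (φ q) ^ 2 * (ψ q) * lam1 + (-2:ℝ) * (u q) * (ψ q) ^ 4 * lam1 ^ 2 * lam2 + (-4:ℝ) * (u q) * (φ q) ^ 2 * (ψ q) ^ 2 * lam1 ^ 2 * lam2 + (-2:ℝ) * (u q) * (φ q) ^ 4 * lam1 ^ 2 * lam2 + (2:ℝ) * (u q) * (pd (1,0) v q) * (ψ q) ^ 3 * lam1 + (2:ℝ) * (u q) * (pd (1,0) v q) * (φ q) ^ 2 * (ψ q) * lam1 + (-2:ℝ) * (u q) * (v q) * (ψ q) ^ 3 * lam1 * lam2 + (2:ℝ) * (u q) * (v q) * (φ q) * (ψ q) ^ 2 * lam1 ^ 2 + (-2:ℝ) * (u q) * (v q) * (φ q) ^ 2 * (ψ q) * lam1 * lam2 + (2:ℝ) * (u q) * (v q) * (φ q) ^ 3 * lam1 ^ 2 + (6:ℝ) * (u q) * (v q) * (pd (1,0) v q) * (ψ q) ^ 2 + (4:ℝ) * (u q) * (v q) ^ 2 * (φ q) * (ψ q) * lam1) * (ψ q)⁻¹ ^ 2) := by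
    intro q hq
    have d1 : DifferentiableAt ℝ u q := DD u hu q hq
    have d2 : DifferentiableAt ℝ v q := DD v hv q hq
    have d3 : DifferentiableAt ℝ φ q := DD φ hφ q hq
    have d4 : DifferentiableAt ℝ ψ q := DD ψ hψ q hq
    have d5 : DifferentiableAt ℝ (pd (1,0) u) q := DD _ cu1 q hq
    have d6 : DifferentiableAt ℝ (pd (1,0) (pd (1,0) u)) q := DD _ cu2 q hq
    have d7 : DifferentiableAt ℝ (pd (1,0) v) q := DD _ cv1 q hq
    have d8 : DifferentiableAt ℝ (pd (1,0) (pd (1,0) v)) q := DD _ cv2 q hq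
    have d0 : ψ q ≠ 0 := hψ0 q hq
    simp (disch := first | assumption | fun_prop (disch := assumption)) only [pd_add, pd_sub, pd_neg, pd_mul, pd_pow, pd_inv, pd_const]
    simp only [(hsol q hq).1, (hsol q hq).2, hφt q hq, hψt q hq]
    field_simp
    ring
  have hp0 : ψ p ≠ 0 := hψ0 p hp
  constructor
  · rw [htu p hp, h3u p hp, h1u p hp]
    field_simp
    ring
  · rw [htv p hp, h3v p hp, h1v p hp]
    field_simp
    ring
end

section
/- Let λ₁, λ₂, k₁, k₂ ∈ ℝ and σ ∈ {1, −1}. Set ξ₁(x,t) := λ₁x + (λ₁³ − 3λ₁λ₂²)t + k₁ and ξ₂(x,t) := −λ₂x + (λ₂³ − 3λ₂λ₁²)t + k₂. On the open set U := {(x,t) ∈ ℝ² : cos ξ₁(x,t) ≠ 0}, the functions u′ = σλ₁·e^{λ₂x − (λ₂³ − 3λ₂λ₁²)t − k₂}·(cos ξ₁)⁻¹ and v′ = σλ₁·e^{−λ₂x + (λ₂³ − 3λ₂λ₁²)t + k₂}·(cos ξ₁)⁻¹ satisfy the coupled KdV system on U: u′_t = −u′_xxx + 6u′v′u′_x and v′_t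 = −v′_xxx + 6u′v′v′_x. -/
noncomputable def FF (a b d α β γ : ℝ) (m : ℕ) : ℝ × ℝ → ℝ :=
  fun q => Real.exp (a * q.1 + b * q.2 + d) * Real.sin (α * q.1 + β * q.2 + γ) ^ m
    / Real.cos (α * q.1 + β * q.2 + γ) ^ (m + 1)

noncomputable def DD (c₁ c₂ : ℝ) : ℝ × ℝ →L[ℝ] ℝ :=
  c₁ • ContinuousLinearMap.fst ℝ ℝ ℝ + c₂ • ContinuousLinearMap.snd ℝ ℝ ℝ

lemma hasFDerivAt_lin (a b d : ℝ) (p : ℝ × ℝ) :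
    HasFDerivAt (fun q : ℝ × ℝ => a * q.1 + b * q.2 + d) (DD a b) p := by
  simpa [DD] using ((hasFDerivAt_fst.const_mul a).add (hasFDerivAt_snd.const_mul b)).add_const d

lemma hFF0 (a b d α β γ : ℝ) (p : ℝ × ℝ) (hp : Real.cos (α * p.1 + β * p.2 + γ) ≠ 0) :
    HasFDerivAt (FF a b d α β γ 0)
      (DD (a * FF a b d α β γ 0 p + α * FF a b d α β γ 1 p)
          (b * FF a b d α β γ 0 p + β * FF a b d α β γ 1 p)) p := by
  have hη := hasFDerivAt_lin a b d p
  have hξ := hasFDerivAt_lin α β γ p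
  have hs := (hasDerivAt_pow 0 (Real.sin (α * p.1 + β * p.2 + γ))).comp_hasFDerivAt p hξ.sin
  have hcp := (hasDerivAt_pow (0 + 1) (Real.cos (α * p.1 + β * p.2 + γ))).comp_hasFDerivAt p hξ.cos
  have hinv := (hasDerivAt_inv (pow_ne_zero (0 + 1) hp)).comp_hasFDerivAt p hcp
  have h := (hη.exp.mul hs).mul hinv
  refine h.congr_fderiv ?_
  refine ContinuousLinearMap.ext fun (v : ℝ × ℝ) => ?_
  simp [DD, FF, Function.comp]
  have hp' : Real.cos (p.1 * α + p.2 * β + γ) ≠ 0 := by rwa [mul_comm p.1, mul_comm p.2]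
  field_simp
  ring

lemma hFFs (a b d α β γ : ℝ) (n : ℕ) (p : ℝ × ℝ)
    (hp : Real.cos (α * p.1 + β * p.2 + γ) ≠ 0) :
    HasFDerivAt (FF a b d α β γ (n + 1))
      (DD (a * FF a b d α β γ (n + 1) p
            + α * (((n : ℝ) + 1) * FF a b d α β γ n p + ((n : ℝ) + 2) * FF a b d α β γ (n + 2) p))
          (b * FF a b d α β γ (n + 1) p
            + β * (((n : ℝ) + 1) * FF a b d α β γ n p + ((n : ℝ) + 2) * FF a b d α β γ (n + 2) p))) p := by
  have hη := hasFDerivAt_lin a b d p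
  have hξ := hasFDerivAt_lin α β γ p
  have hs := (hasDerivAt_pow (n + 1) (Real.sin (α * p.1 + β * p.2 + γ))).comp_hasFDerivAt p hξ.sin
  have hcp := (hasDerivAt_pow (n + 1 + 1) (Real.cos (α * p.1 + β * p.2 + γ))).comp_hasFDerivAt p hξ.cos
  have hinv := (hasDerivAt_inv (pow_ne_zero (n + 1 + 1) hp)).comp_hasFDerivAt p hcp
  have h := (hη.exp.mul hs).mul hinv
  refine h.congr_fderiv ?_
  refine ContinuousLinearMap.ext fun (v : ℝ × ℝ) => ?_
  simp [DD, FF, Function.comp]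
  have hp' : Real.cos (p.1 * α + p.2 * β + γ) ≠ 0 := by rwa [mul_comm p.1, mul_comm p.2]
  field_simp
  ring
lemma px_of {f : ℝ × ℝ → ℝ} {c₁ c₂ : ℝ} {p : ℝ × ℝ} (h : HasFDerivAt f (DD c₁ c₂) p) :
    px f p = c₁ := by
  simp [px, h.fderiv, DD]

lemma pt_of {f : ℝ × ℝ → ℝ} {c₁ c₂ : ℝ} {p : ℝ × ℝ} (h : HasFDerivAt f (DD c₁ c₂) p) :
    pt f p = c₂ := by
  simp [pt, h.fderiv, DD]

lemma DD_comb {f g : ℝ × ℝ → ℝ} {c₁ c₂ e₁ e₂ : ℝ} (c e : ℝ) {p : ℝ × ℝ}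
    (hf : HasFDerivAt f (DD c₁ c₂) p) (hg : HasFDerivAt g (DD e₁ e₂) p) :
    HasFDerivAt (fun q => c * f q + e * g q) (DD (c * c₁ + e * e₁) (c * c₂ + e * e₂)) p := by
  have h := (hf.const_mul c).add (hg.const_mul e)
  refine h.congr_fderiv ?_
  refine ContinuousLinearMap.ext fun (v : ℝ × ℝ) => ?_
  simp [DD]
  ring

lemma DD_cmul {f : ℝ × ℝ → ℝ} {c₁ c₂ : ℝ} (c : ℝ) {p : ℝ × ℝ}
    (hf : HasFDerivAt f (DD c₁ c₂) p) :
    HasFDerivAt (fun q => c * f q) (DD (c * c₁) (c * c₂)) p := by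
  have h := hf.const_mul c
  refine h.congr_fderiv ?_
  refine ContinuousLinearMap.ext fun (v : ℝ × ℝ) => ?_
  simp [DD]
  ring

lemma DD_comb3 {f g h : ℝ × ℝ → ℝ} {c₁ c₂ e₁ e₂ k₁ k₂ : ℝ} (c e k : ℝ) {p : ℝ × ℝ}
    (hf : HasFDerivAt f (DD c₁ c₂) p) (hg : HasFDerivAt g (DD e₁ e₂) p)
    (hh : HasFDerivAt h (DD k₁ k₂) p) :
    HasFDerivAt (fun q => c * f q + e * g q + k * h q)
      (DD (c * c₁ + e * e₁ + k * k₁) (c * c₂ + e * e₂ + k * k₂)) p := by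
  have h2 := (DD_comb c e hf hg).add (hh.const_mul k)
  refine h2.congr_fderiv ?_
  refine ContinuousLinearMap.ext fun (v : ℝ × ℝ) => ?_
  simp [DD]
  ring

lemma px_congr {f g : ℝ × ℝ → ℝ} {p : ℝ × ℝ} (h : f =ᶠ[nhds p] g) : px f p = px g p := by
  simp [px, h.fderiv_eq]

lemma master (a b d α β γ C : ℝ) (hb : b = 3 * a * α ^ 2 - a ^ 3)
    (hβ : β = α ^ 3 - 3 * a ^ 2 * α) (p : ℝ × ℝ)
    (hp : Real.cos (α * p.1 + β * p.2 + γ) ≠ 0) :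
    pt (fun q => C * FF a b d α β γ 0 q) p
      = -(px (px (px (fun q => C * FF a b d α β γ 0 q))) p)
        + 6 * (α ^ 2 / Real.cos (α * p.1 + β * p.2 + γ) ^ 2)
          * px (fun q => C * FF a b d α β γ 0 q) p := by
  have hU : IsOpen {q : ℝ × ℝ | Real.cos (α * q.1 + β * q.2 + γ) ≠ 0} := by
    have hc : Continuous fun q : ℝ × ℝ => Real.cos (α * q.1 + β * q.2 + γ) := by continuity
    exact isOpen_compl_singleton.preimage hc
  set U : Set (ℝ × ℝ) := {q : ℝ × ℝ | Real.cos (α * q.1 + β * q.2 + γ) ≠ 0} with hUdef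
  have hpU : p ∈ U := hp
  -- first derivative, valid on U
  have h1 : ∀ q ∈ U, px (fun q => C * FF a b d α β γ 0 q) q
      = (C * a) * FF a b d α β γ 0 q + (C * α) * FF a b d α β γ 1 q := by
    intro q hq
    rw [px_of (DD_cmul C (hFF0 a b d α β γ q hq))]
    ring
  -- second derivative, valid on U
  have h2 : ∀ q ∈ U, px (px (fun q => C * FF a b d α β γ 0 q)) q
      = (C * (a ^ 2 + α ^ 2)) * FF a b d α β γ 0 q + (2 * C * a * α) * FF a b d α β γ 1 q
        + (2 * C * α ^ 2) * FF a b d α β γ 2 q := by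
    intro q hq
    have heq : px (fun q => C * FF a b d α β γ 0 q) =ᶠ[nhds q]
        (fun r => (C * a) * FF a b d α β γ 0 r + (C * α) * FF a b d α β γ 1 r) :=
      Filter.eventuallyEq_of_mem (hU.mem_nhds hq) h1
    rw [px_congr heq,
      px_of (DD_comb (C * a) (C * α) (hFF0 a b d α β γ q hq) (hFFs a b d α β γ 0 q hq))]
    norm_num
    ring
  -- third derivative at p
  have h3 : px (px (px (fun q => C * FF a b d α β γ 0 q))) p
      = (C * (a ^ 2 + α ^ 2)) * (a * FF a b d α β γ 0 p + α * FF a b d α β γ 1 p)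
        + (2 * C * a * α) * (a * FF a b d α β γ 1 p
            + α * ((0 + 1) * FF a b d α β γ 0 p + (0 + 2) * FF a b d α β γ 2 p))
        + (2 * C * α ^ 2) * (a * FF a b d α β γ 2 p
            + α * ((1 + 1) * FF a b d α β γ 1 p + (1 + 2) * FF a b d α β γ 3 p)) := by
    have heq : px (px (fun q => C * FF a b d α β γ 0 q)) =ᶠ[nhds p]
        (fun r => (C * (a ^ 2 + α ^ 2)) * FF a b d α β γ 0 r
          + (2 * C * a * α) * FF a b d α β γ 1 r + (2 * C * α ^ 2) * FF a b d α β γ 2 r) :=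
      Filter.eventuallyEq_of_mem (hU.mem_nhds hpU) h2
    rw [px_congr heq,
      px_of (DD_comb3 (C * (a ^ 2 + α ^ 2)) (2 * C * a * α) (2 * C * α ^ 2)
        (hFF0 a b d α β γ p hp) (hFFs a b d α β γ 0 p hp) (hFFs a b d α β γ 1 p hp))]
    norm_num
  have h0 : pt (fun q => C * FF a b d α β γ 0 q) p
      = C * (b * FF a b d α β γ 0 p + β * FF a b d α β γ 1 p) :=
    pt_of (DD_cmul C (hFF0 a b d α β γ p hp))
  rw [h0, h3, h1 p hpU]
  subst hb hβ
  simp only [FF]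
  norm_num
  simp only [show ∀ x : ℝ, Real.sin x ^ 3 = Real.sin x * Real.sin x ^ 2 from
    fun x => by ring, Real.sin_sq]
  generalize Real.cos (α * p.1 + (α ^ 3 - 3 * a ^ 2 * α) * p.2 + γ) = c at hp ⊢
  field_simp
  ring

/-- The four-parameter family obtained from the trivial solution `u = v = 0`
by the Bäcklund transformation solves the coupled KdV system on the open set
where `cos ξ₁ ≠ 0`. -/
theorem backlund_from_trivial_solution (lam1 lam2 k1 k2 : ℝ) (σ : ℝ)
    (hσ : σ = 1 ∨ σ = -1) :
    ∀ p ∈ {q : ℝ × ℝ |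
        Real.cos (lam1 * q.1 + (lam1 ^ 3 - 3 * lam1 * lam2 ^ 2) * q.2 + k1) ≠ 0},
      (pt (fun q => σ * lam1
            * Real.exp (lam2 * q.1 - (lam2 ^ 3 - 3 * lam2 * lam1 ^ 2) * q.2 - k2)
            / Real.cos (lam1 * q.1 + (lam1 ^ 3 - 3 * lam1 * lam2 ^ 2) * q.2 + k1)) p
        = -(px (px (px (fun q => σ * lam1
            * Real.exp (lam2 * q.1 - (lam2 ^ 3 - 3 * lam2 * lam1 ^ 2) * q.2 - k2)
            / Real.cos (lam1 * q.1 + (lam1 ^ 3 - 3 * lam1 * lam2 ^ 2) * q.2 + k1)))) p)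
          + 6 * (σ * lam1
              * Real.exp (lam2 * p.1 - (lam2 ^ 3 - 3 * lam2 * lam1 ^ 2) * p.2 - k2)
              / Real.cos (lam1 * p.1 + (lam1 ^ 3 - 3 * lam1 * lam2 ^ 2) * p.2 + k1))
            * (σ * lam1
              * Real.exp (-(lam2 * p.1) + (lam2 ^ 3 - 3 * lam2 * lam1 ^ 2) * p.2 + k2)
              / Real.cos (lam1 * p.1 + (lam1 ^ 3 - 3 * lam1 * lam2 ^ 2) * p.2 + k1))
            * px (fun q => σ * lam1
              * Real.exp (lam2 * q.1 - (lam2 ^ 3 - 3 * lam2 * lam1 ^ 2) * q.2 - k2)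
              / Real.cos (lam1 * q.1 + (lam1 ^ 3 - 3 * lam1 * lam2 ^ 2) * q.2 + k1)) p) ∧
      (pt (fun q => σ * lam1
            * Real.exp (-(lam2 * q.1) + (lam2 ^ 3 - 3 * lam2 * lam1 ^ 2) * q.2 + k2)
            / Real.cos (lam1 * q.1 + (lam1 ^ 3 - 3 * lam1 * lam2 ^ 2) * q.2 + k1)) p
        = -(px (px (px (fun q => σ * lam1
            * Real.exp (-(lam2 * q.1) + (lam2 ^ 3 - 3 * lam2 * lam1 ^ 2) * q.2 + k2)
            / Real.cos (lam1 * q.1 + (lam1 ^ 3 - 3 * lam1 * lam2 ^ 2) * q.2 + k1)))) p)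
          + 6 * (σ * lam1
              * Real.exp (lam2 * p.1 - (lam2 ^ 3 - 3 * lam2 * lam1 ^ 2) * p.2 - k2)
              / Real.cos (lam1 * p.1 + (lam1 ^ 3 - 3 * lam1 * lam2 ^ 2) * p.2 + k1))
            * (σ * lam1
              * Real.exp (-(lam2 * p.1) + (lam2 ^ 3 - 3 * lam2 * lam1 ^ 2) * p.2 + k2)
              / Real.cos (lam1 * p.1 + (lam1 ^ 3 - 3 * lam1 * lam2 ^ 2) * p.2 + k1))
            * px (fun q => σ * lam1
              * Real.exp (-(lam2 * q.1) + (lam2 ^ 3 - 3 * lam2 * lam1 ^ 2) * q.2 + k2)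
              / Real.cos (lam1 * q.1 + (lam1 ^ 3 - 3 * lam1 * lam2 ^ 2) * q.2 + k1)) p) := by
  intro p hp
  simp only [Set.mem_setOf_eq] at hp
  have hσ2 : σ * σ = 1 := by rcases hσ with h | h <;> rw [h] <;> norm_num
  have hu : (fun q : ℝ × ℝ => σ * lam1
        * Real.exp (lam2 * q.1 - (lam2 ^ 3 - 3 * lam2 * lam1 ^ 2) * q.2 - k2)
        / Real.cos (lam1 * q.1 + (lam1 ^ 3 - 3 * lam1 * lam2 ^ 2) * q.2 + k1))
      = fun q => (σ * lam1) * FF lam2 (-(lam2 ^ 3 - 3 * lam2 * lam1 ^ 2)) (-k2) lam1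
          (lam1 ^ 3 - 3 * lam1 * lam2 ^ 2) k1 0 q := by
    funext q
    norm_num [FF]
    ring_nf
  have hv : (fun q : ℝ × ℝ => σ * lam1
        * Real.exp (-(lam2 * q.1) + (lam2 ^ 3 - 3 * lam2 * lam1 ^ 2) * q.2 + k2)
        / Real.cos (lam1 * q.1 + (lam1 ^ 3 - 3 * lam1 * lam2 ^ 2) * q.2 + k1))
      = fun q => (σ * lam1) * FF (-lam2) (lam2 ^ 3 - 3 * lam2 * lam1 ^ 2) k2 lam1
          (lam1 ^ 3 - 3 * lam1 * lam2 ^ 2) k1 0 q := by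
    funext q
    norm_num [FF]
    ring_nf
  have he : Real.exp (lam2 * p.1 - (lam2 ^ 3 - 3 * lam2 * lam1 ^ 2) * p.2 - k2)
      * Real.exp (-(lam2 * p.1) + (lam2 ^ 3 - 3 * lam2 * lam1 ^ 2) * p.2 + k2) = 1 := by
    rw [← Real.exp_add, show (lam2 * p.1 - (lam2 ^ 3 - 3 * lam2 * lam1 ^ 2) * p.2 - k2)
      + (-(lam2 * p.1) + (lam2 ^ 3 - 3 * lam2 * lam1 ^ 2) * p.2 + k2) = 0 by ring,
      Real.exp_zero]
  have hprod : (σ * lam1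
        * Real.exp (lam2 * p.1 - (lam2 ^ 3 - 3 * lam2 * lam1 ^ 2) * p.2 - k2)
        / Real.cos (lam1 * p.1 + (lam1 ^ 3 - 3 * lam1 * lam2 ^ 2) * p.2 + k1))
      * (σ * lam1
        * Real.exp (-(lam2 * p.1) + (lam2 ^ 3 - 3 * lam2 * lam1 ^ 2) * p.2 + k2)
        / Real.cos (lam1 * p.1 + (lam1 ^ 3 - 3 * lam1 * lam2 ^ 2) * p.2 + k1))
      = lam1 ^ 2 / Real.cos (lam1 * p.1 + (lam1 ^ 3 - 3 * lam1 * lam2 ^ 2) * p.2 + k1) ^ 2 := by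
    rw [div_mul_div_comm, ← sq]
    rw [show σ * lam1 * Real.exp (lam2 * p.1 - (lam2 ^ 3 - 3 * lam2 * lam1 ^ 2) * p.2 - k2)
        * (σ * lam1 * Real.exp (-(lam2 * p.1) + (lam2 ^ 3 - 3 * lam2 * lam1 ^ 2) * p.2 + k2))
      = σ * σ * lam1 ^ 2 * (Real.exp (lam2 * p.1 - (lam2 ^ 3 - 3 * lam2 * lam1 ^ 2) * p.2 - k2)
          * Real.exp (-(lam2 * p.1) + (lam2 ^ 3 - 3 * lam2 * lam1 ^ 2) * p.2 + k2)) by ring,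
      hσ2, he]
    ring
  constructor
  · rw [hu]
    have key := master lam2 (-(lam2 ^ 3 - 3 * lam2 * lam1 ^ 2)) (-k2) lam1
      (lam1 ^ 3 - 3 * lam1 * lam2 ^ 2) k1 (σ * lam1) (by ring) (by ring) p hp
    set W := px (fun q => (σ * lam1) * FF lam2
      (-(lam2 ^ 3 - 3 * lam2 * lam1 ^ 2)) (-k2) lam1
      (lam1 ^ 3 - 3 * lam1 * lam2 ^ 2) k1 0 q) p with hW
    set T := lam1 ^ 2 * (Real.cos (lam1 * p.1 + (lam1 ^ 3 - 3 * lam1 * lam2 ^ 2) * p.2 + k1))⁻¹ ^ 2 * W with hT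
    linear_combination key + 6 * W * hprod + (-12 * T * (σ * σ)) * he + (-12 * T) * hσ2
  · rw [hv]
    have key := master (-lam2) (lam2 ^ 3 - 3 * lam2 * lam1 ^ 2) k2 lam1
      (lam1 ^ 3 - 3 * lam1 * lam2 ^ 2) k1 (σ * lam1) (by ring) (by ring) p hp
    set W := px (fun q => (σ * lam1) * FF (-lam2)
      (lam2 ^ 3 - 3 * lam2 * lam1 ^ 2) k2 lam1
      (lam1 ^ 3 - 3 * lam1 * lam2 ^ 2) k1 0 q) p with hW
    set T := lam1 ^ 2 * (Real.cos (lam1 * p.1 + (lam1 ^ 3 - 3 * lam1 * lam2 ^ 2) * p.2 + k1))⁻¹ ^ 2 * W with hT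
    linear_combination key + 6 * W * hprod + (-12 * T * (σ * σ)) * he + (-12 * T) * hσ2
end
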